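/- Let ζ, η ∈ ℝ with ζ ≠ 0 and η ≥ 0, and let S̄ ∈ ℝ satisfy S̄ + 6 = 9ζ²/(η + ζ²). Let φ : ℝ → ℝ be twice differentiable with φ(t) > 0 for all t. Then -2ζ·φ''(t)/φ(t) - (η + ζ² - 2ζ)·(φ'(t)/φ(t))² + 6ζ·φ'(t)/φ(t) - 6 = S̄ for all t ∈ ℝ if and only if there exist constants c₁, c₂ ∈ ℝ such that c₁·exp((3/2)·t) + c₂·t·exp((3/2)·t) > 0 for all t and φ(t) = (c₁·exp((3/2)·t) + c₂·t·exp((3/2)·t))^{2ζ/(η+ζ²)} for all t ∈ ℝ. -/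

import Mathlib

/-!
With `k = η + ζ²` and `r = k / (2ζ)`, put `ψ = φ ^ r`. Then
`ψ''/ψ - 3ψ'/ψ + 9/4 = r φ''/φ + r (r - 1) (φ'/φ)² - 3r φ'/φ + 9/4` is `-k / (4ζ²)` times the
difference between the scalar curvature and `S̄`, so the curvature equation is equivalent to the
linear equation `ψ'' - 3ψ' + (9/4) ψ = 0`. Its characteristic root `3/2` is double, hence
`ψ e^{-3t/2}` is affine, and `φ = ψ ^ (2ζ / k)`.
-/

open Real

theorem deriv_deriv_eq_zero_iff_exists_affine {f : ℝ → ℝ} (hf : Differentiable ℝ f)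
    (hf' : Differentiable ℝ (deriv f)) :
    (∀ t, deriv (deriv f) t = 0) ↔ ∃ c₁ c₂ : ℝ, ∀ t, f t = c₁ + c₂ * t := by
  constructor
  · intro h
    have hslope : ∀ t, deriv f t = deriv f 0 := fun t => is_const_of_deriv_eq_zero hf' h t 0
    have hg : ∀ t, HasDerivAt (fun t => f t - deriv f 0 * t) 0 t := fun t =>
      ((hf t).hasDerivAt.sub ((hasDerivAt_id' t).const_mul (deriv f 0))).congr_deriv
        (by rw [hslope t, mul_one, sub_self])
    refine ⟨f 0, deriv f 0, fun t => ?_⟩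
    have := is_const_of_deriv_eq_zero (fun t => (hg t).differentiableAt)
      (fun t => (hg t).deriv) t 0
    simp only [mul_zero, sub_zero] at this
    linarith
  · rintro ⟨c₁, c₂, hf⟩ t
    obtain rfl : f = fun t => c₁ + c₂ * t := funext hf
    simp

theorem deriv_deriv_sub_add_eq_zero_iff {y : ℝ → ℝ} (a : ℝ) (hy : Differentiable ℝ y)
    (hy' : Differentiable ℝ (deriv y)) :
    (∀ t, deriv (deriv y) t - 2 * a * deriv y t + a ^ 2 * y t = 0) ↔
      ∃ c₁ c₂ : ℝ, ∀ t, y t = c₁ * exp (a * t) + c₂ * t * exp (a * t) := by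
  set u : ℝ → ℝ := fun t => y t * exp (-(a * t))
  have he : ∀ t, HasDerivAt (fun t => exp (-(a * t))) (-a * exp (-(a * t))) t := fun t => by
    simpa [mul_comm] using ((hasDerivAt_id t).const_mul a).neg.exp
  have hu : deriv u = fun t => (deriv y t - a * y t) * exp (-(a * t)) :=
    funext fun t => ((hy t).hasDerivAt.mul (he t)).deriv.trans (by ring)
  have hu' : ∀ t, HasDerivAt (deriv u)
      ((deriv (deriv y) t - 2 * a * deriv y t + a ^ 2 * y t) * exp (-(a * t))) t := fun t => by
    rw [hu]
    exact (((hy' t).hasDerivAt.sub ((hy t).hasDerivAt.const_mul a)).mul (he t)).congr_deriv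
      (by simp only [Pi.sub_apply]; ring)
  have hy_eq : ∀ t, y t = u t * exp (a * t) := fun t => by
    simp only [u, mul_assoc, ← exp_add, neg_add_cancel, exp_zero, mul_one]
  calc (∀ t, deriv (deriv y) t - 2 * a * deriv y t + a ^ 2 * y t = 0)
      ↔ ∀ t, deriv (deriv u) t = 0 := by simp [(hu' _).deriv, exp_ne_zero]
    _ ↔ ∃ c₁ c₂ : ℝ, ∀ t, u t = c₁ + c₂ * t :=
        deriv_deriv_eq_zero_iff_exists_affine
          (fun t => ((hy t).hasDerivAt.mul (he t)).differentiableAt)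
          fun t => (hu' t).differentiableAt
    _ ↔ ∃ c₁ c₂ : ℝ, ∀ t, y t = c₁ * exp (a * t) + c₂ * t * exp (a * t) := by
        refine exists₂_congr fun c₁ c₂ => forall_congr' fun t => ?_
        rw [hy_eq t, ← add_mul, mul_left_inj' (exp_ne_zero _)]

section RpowComp

variable {φ : ℝ → ℝ} (hφ : Differentiable ℝ φ) (hφpos : ∀ t, 0 < φ t) (r : ℝ)
include hφ hφpos

theorem deriv_rpow_const_of_pos :
    deriv (fun t => φ t ^ r) = fun t => r * (deriv φ t / φ t) * φ t ^ r := funext fun t => by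
  rw [((hφ t).hasDerivAt.rpow_const (Or.inl (hφpos t).ne')).deriv, rpow_sub_one (hφpos t).ne']
  field_simp

theorem hasDerivAt_deriv_rpow_const_of_pos (hφ' : Differentiable ℝ (deriv φ)) (t : ℝ) :
    HasDerivAt (deriv fun t => φ t ^ r)
      ((r * (deriv (deriv φ) t / φ t) + r * (r - 1) * (deriv φ t / φ t) ^ 2) * φ t ^ r) t := by
  rw [deriv_rpow_const_of_pos hφ hφpos]
  refine ((((hφ' t).hasDerivAt.div (hφ t).hasDerivAt (hφpos t).ne').const_mul r).mul
    ((hφ t).hasDerivAt.rpow_const (p := r) (Or.inl (hφpos t).ne'))).congr_deriv ?_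
  rw [rpow_sub_one (hφpos t).ne', Pi.div_apply]
  field_simp
  ring

end RpowComp

theorem rpow_inv_eq_iff_pos_and_eq_rpow {x y z : ℝ} (hx : 0 < x) (hz : z ≠ 0) :
    x ^ z⁻¹ = y ↔ 0 < y ∧ x = y ^ z := by
  constructor
  · rintro rfl
    exact ⟨rpow_pos_of_pos hx _, ((rpow_inv_eq hx.le (rpow_pos_of_pos hx _).le hz).1 rfl)⟩
  · rintro ⟨hy, rfl⟩
    exact (rpow_inv_eq (rpow_pos_of_pos hy _).le hy.le hz).2 rfl

/-- `x, x', x''` stand for `φ t, φ' t, φ'' t`; the right-hand side is `ψ'' - 3ψ' + (9/4) ψ` at `t`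
for `ψ = φ ^ r`. -/
theorem scalarCurvature_eq_iff {ζ η Sbar r : ℝ} (hζ : ζ ≠ 0) (hk : η + ζ ^ 2 ≠ 0)
    (hr : 2 * ζ * r = η + ζ ^ 2) (hS : Sbar + 6 = 9 * ζ ^ 2 / (η + ζ ^ 2)) {x x' x'' : ℝ}
    (hx : 0 < x) :
    -2 * ζ * x'' / x - (η + ζ ^ 2 - 2 * ζ) * (x' / x) ^ 2 + 6 * ζ * (x' / x) - 6 = Sbar ↔
      (r * (x'' / x) + r * (r - 1) * (x' / x) ^ 2) * x ^ r - 2 * (3 / 2) * (r * (x' / x) * x ^ r)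
        + (3 / 2) ^ 2 * x ^ r = 0 := by
  have hSbar : Sbar = 9 * ζ ^ 2 / (η + ζ ^ 2) - 6 := by linarith
  have hr0 : r ≠ 0 := by
    rintro rfl
    exact hk (by rw [← hr, mul_zero])
  have key : -2 * ζ * x'' / x - (η + ζ ^ 2 - 2 * ζ) * (x' / x) ^ 2 + 6 * ζ * (x' / x) - 6 - Sbar
      = -(4 * ζ ^ 2 / (η + ζ ^ 2)) *
        (r * (x'' / x) + r * (r - 1) * (x' / x) ^ 2 - 3 * r * (x' / x) + (3 / 2) ^ 2) := by
    rw [hSbar, ← hr]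
    field_simp
    ring
  rw [← sub_eq_zero, key, show ∀ a b c : ℝ, a * x ^ r - 2 * (3 / 2) * (b * x ^ r) + c * x ^ r
    = (a - 3 * b + c) * x ^ r from fun _ _ _ => by ring]
  simp [hζ, hk, (rpow_pos_of_pos hx r).ne', mul_assoc]

theorem stmt_16 (ζ η Sbar : ℝ) (hζ : ζ ≠ 0) (hη : 0 ≤ η)
    (hS : Sbar + 6 = 9 * ζ ^ 2 / (η + ζ ^ 2))
    (φ : ℝ → ℝ)
    (hφ : Differentiable ℝ φ) (hφ' : Differentiable ℝ (deriv φ))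
    (hφpos : ∀ t : ℝ, 0 < φ t) :
    (∀ t : ℝ, -2 * ζ * deriv (deriv φ) t / φ t
        - (η + ζ ^ 2 - 2 * ζ) * (deriv φ t / φ t) ^ 2
        + 6 * ζ * (deriv φ t / φ t) - 6 = Sbar) ↔
    ∃ c₁ c₂ : ℝ,
      (∀ t : ℝ, 0 < c₁ * Real.exp ((3/2) * t) + c₂ * t * Real.exp ((3/2) * t)) ∧
      ∀ t : ℝ, φ t = (c₁ * Real.exp ((3/2) * t)
        + c₂ * t * Real.exp ((3/2) * t)) ^ (2 * ζ / (η + ζ ^ 2)) := by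
  have hk : η + ζ ^ 2 ≠ 0 := by positivity
  set s := 2 * ζ / (η + ζ ^ 2)
  have hs : s ≠ 0 := div_ne_zero (mul_ne_zero two_ne_zero hζ) hk
  set ψ : ℝ → ℝ := fun t => φ t ^ s⁻¹
  have hψ : Differentiable ℝ ψ := hφ.rpow_const fun t => Or.inl (hφpos t).ne'
  have hψ'' := hasDerivAt_deriv_rpow_const_of_pos hφ hφpos s⁻¹ hφ'
  have hψ_ode : ∀ t, (-2 * ζ * deriv (deriv φ) t / φ t
      - (η + ζ ^ 2 - 2 * ζ) * (deriv φ t / φ t) ^ 2 + 6 * ζ * (deriv φ t / φ t) - 6 = Sbar) ↔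
      deriv (deriv ψ) t - 2 * (3 / 2) * deriv ψ t + (3 / 2) ^ 2 * ψ t = 0 := fun t => by
    rw [(hψ'' t).deriv, deriv_rpow_const_of_pos hφ hφpos]
    exact scalarCurvature_eq_iff hζ hk (by rw [inv_div]; field_simp) hS (hφpos t)
  rw [forall_congr' hψ_ode,
    deriv_deriv_sub_add_eq_zero_iff (3 / 2) hψ fun t => (hψ'' t).differentiableAt]
  refine exists₂_congr fun c₁ c₂ => ?_
  rw [← forall_and]
  exact forall_congr' fun t => rpow_inv_eq_iff_pos_and_eq_rpow (hφpos t) hs
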